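/- arXiv:1602.04882 — 3 statements merged into one kernel-verified Lean document; each statement's English description precedes it below -/
import Mathlib

section
/- Let B be an invertible 2×2 real matrix, ℒ = Bℤ², ℒ̃ = 2π(Bᵀ)⁻¹ℤ², A a 2×2 integer matrix with d = |det A| ≠ 0, ℒ' = BAℤ², and (ℒ')̃ = 2π(Bᵀ)⁻¹(Aᵀ)⁻¹ℤ². Let λ₀ = 0, λ₁, …, λ_{d−1} ∈ (ℒ')̃ be a complete set of representatives of the d cosets of ℒ̃ in (ℒ')̃. Let S' ⊂ ℝ² be a bounded measurable set such that the translates S' + λ_m (m = 0, …, d−1) are pairwise disjoint up to Lebesgue-null sets. Then S' is a frequency support of ℒ' if and only if ⋃_{m=0}^{d−1}(S' + λ_m) is a frequency support of ℒ. -/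
/-!
Write `χₙ(ξ) = exp(i n·ξ)`. Since `χₙ` is a character, the integral of `χₙ` over the a.e.-disjoint
union `⋃ₘ (S' + λₘ)` is `(∑ₘ χₙ(λₘ)) · ∫_{S'} χₙ`. A lattice is exactly the annihilator of its
reciprocal lattice, so for `n ∈ ℒ` the function `χₙ` is trivial on `ℒ̃` and `∑ₘ χₙ(λₘ)` is a sum of
a character of the finite group `(ℒ')̃ / ℒ̃` over all its elements: it is `d` if `n ∈ ℒ'` and `0`
otherwise. Together with `|det(BA)| = d |det B|` and `ℒ' ⊆ ℒ`, this turns each of the two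
frequency-support conditions into the other.
-/

open scoped Matrix Real
open MeasureTheory

/-- Translation by `μ` permutes the cosets `lam m + H`, so the sum is multiplied by `ψ μ`. -/
theorem AddChar.sum_cosetReps_eq_zero {G R κ : Type*} [AddCommGroup G] [CommRing R] [IsDomain R]
    [Fintype κ] (ψ : AddChar G R) {H K : AddSubgroup G} (hψ : ∀ h ∈ H, ψ h = 1)
    (lam : κ → G) (hlam : ∀ m, lam m ∈ K) (hrep : ∀ x ∈ K, ∃! m, x - lam m ∈ H)
    {μ : G} (hμK : μ ∈ K) (hμ : ψ μ ≠ 1) : ∑ m, ψ (lam m) = 0 := by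
  choose σ hσ using fun m => (hrep _ (K.add_mem (hlam m) hμK)).exists
  have hσinj : Function.Injective σ := by
    intro m₁ m₂ h
    have hdiff : lam m₁ - lam m₂ ∈ H := by
      convert H.sub_mem (hσ m₁) (h ▸ hσ m₂) using 1
      abel
    exact (hrep _ (hlam m₁)).unique (by simp) hdiff
  have hstep : ∀ m, ψ (lam (σ m)) = ψ μ * ψ (lam m) := by
    intro m
    rw [← AddChar.map_add_eq_mul, ← mul_one (ψ (lam (σ m))), ← hψ _ (hσ m),
      ← AddChar.map_add_eq_mul]
    congr 1
    abel
  have hsum : ψ μ * ∑ m, ψ (lam m) = ∑ m, ψ (lam m) := by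
    simp_rw [Finset.mul_sum, ← hstep]
    exact (Finite.injective_iff_bijective.mp hσinj).sum_comp fun m => ψ (lam m)
  exact (mul_left_eq_self₀.mp hsum).resolve_left hμ

variable {ι : Type*} [Fintype ι]

def intLattice (M : Matrix ι ι ℝ) : AddSubgroup (ι → ℝ) where
  carrier := {x | ∃ k : ι → ℤ, x = M *ᵥ fun i => (k i : ℝ)}
  add_mem' := by
    rintro _ _ ⟨k, rfl⟩ ⟨l, rfl⟩
    exact ⟨k + l, by simp only [Pi.add_apply, Int.cast_add, ← Matrix.mulVec_add]; rfl⟩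
  zero_mem' := ⟨0, by simp only [Pi.zero_apply, Int.cast_zero]; exact (Matrix.mulVec_zero M).symm⟩
  neg_mem' := by
    rintro _ ⟨k, rfl⟩
    exact ⟨-k, by simp only [Pi.neg_apply, Int.cast_neg, ← Matrix.mulVec_neg]; rfl⟩

lemma mem_intLattice {M : Matrix ι ι ℝ} {x : ι → ℝ} :
    x ∈ intLattice M ↔ ∃ k : ι → ℤ, x = M *ᵥ fun i => (k i : ℝ) := Iff.rfl

lemma intLattice_mul_intCast_le (M : Matrix ι ι ℝ) (A : Matrix ι ι ℤ) :
    intLattice (M * A.map (Int.cast : ℤ → ℝ)) ≤ intLattice M := by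
  rintro _ ⟨k, rfl⟩
  refine ⟨A *ᵥ k, ?_⟩
  rw [← Matrix.mulVec_mulVec]
  congr 1
  ext i
  simp [Matrix.mulVec, dotProduct]

noncomputable def expDotChar (n : ι → ℝ) : AddChar (ι → ℝ) ℂ where
  toFun ξ := Complex.exp (Complex.I * (n ⬝ᵥ ξ : ℝ))
  map_zero_eq_one' := by simp
  map_add_eq_mul' x y := by simp [dotProduct_add, mul_add, Complex.exp_add]

@[simp]
lemma expDotChar_apply (n ξ : ι → ℝ) :
    expDotChar n ξ = Complex.exp (Complex.I * (n ⬝ᵥ ξ : ℝ)) := rfl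

lemma expDotChar_eq_one_iff (n ξ : ι → ℝ) :
    expDotChar n ξ = 1 ↔ ∃ k : ℤ, n ⬝ᵥ ξ = 2 * π * k := by
  rw [expDotChar_apply, Complex.exp_eq_one_iff]
  refine exists_congr fun k => ?_
  rw [show (k : ℂ) * (2 * π * Complex.I) = Complex.I * ((2 * π * k : ℝ) : ℂ) by push_cast; ring,
    mul_right_inj' Complex.I_ne_zero, Complex.ofReal_inj]

lemma continuous_expDotChar (n : ι → ℝ) : Continuous (expDotChar n) := by
  change Continuous fun ξ => Complex.exp (Complex.I * (n ⬝ᵥ ξ : ℝ))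
  fun_prop

lemma integrableOn_expDotChar (n : ι → ℝ) {S : Set (ι → ℝ)} (hS : volume S ≠ ⊤) :
    IntegrableOn (expDotChar n) S :=
  Measure.integrableOn_of_bounded (M := 1) hS (continuous_expDotChar n).aestronglyMeasurable
    (.of_forall fun ξ => by simp [Complex.norm_exp])

lemma volume_image_add_left (a : ι → ℝ) (S : Set (ι → ℝ)) :
    volume ((a + ·) '' S) = volume S :=
  measure_vadd volume a S

lemma setIntegral_image_add_left_expDotChar (n a : ι → ℝ) (S : Set (ι → ℝ)) :
    ∫ ξ in (a + ·) '' S, expDotChar n ξ = expDotChar n a * ∫ ξ in S, expDotChar n ξ := by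
  rw [(measurePreserving_add_left volume a).setIntegral_image_emb
    (measurableEmbedding_addLeft a), ← integral_const_mul]
  simp_rw [AddChar.map_add_eq_mul]

theorem setIntegral_iUnion_image_add_left_expDotChar {κ : Type*} [Fintype κ] (n : ι → ℝ)
    (lam : κ → ι → ℝ) {S : Set (ι → ℝ)} (hS : MeasurableSet S) (hSfin : volume S ≠ ⊤)
    (hdisj : Pairwise fun m m' => volume ((lam m + ·) '' S ∩ (lam m' + ·) '' S) = 0) :
    ∫ ξ in ⋃ m, (lam m + ·) '' S, expDotChar n ξ =
      (∑ m, expDotChar n (lam m)) * ∫ ξ in S, expDotChar n ξ := by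
  have hmeas : ∀ m, MeasurableSet ((lam m + ·) '' S) := fun m =>
    (measurableEmbedding_addLeft (lam m)).measurableSet_image.mpr hS
  have hint : IntegrableOn (expDotChar n) (⋃ m, (lam m + ·) '' S) :=
    integrableOn_finite_iUnion.mpr fun m =>
      integrableOn_expDotChar n (by rwa [volume_image_add_left])
  rw [integral_iUnion_ae (fun m => (hmeas m).nullMeasurableSet) hdisj hint, tsum_fintype,
    Finset.sum_mul]
  simp_rw [setIntegral_image_add_left_expDotChar]

variable [DecidableEq ι]

noncomputable def reciprocalLattice (M : Matrix ι ι ℝ) : AddSubgroup (ι → ℝ) :=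
  intLattice ((2 * π) • (Mᵀ)⁻¹)

lemma mem_reciprocalLattice {M : Matrix ι ι ℝ} {x : ι → ℝ} :
    x ∈ reciprocalLattice M ↔ ∃ k : ι → ℤ, x = (2 * π) • (Mᵀ)⁻¹ *ᵥ fun i => (k i : ℝ) := by
  simp only [reciprocalLattice, mem_intLattice, Matrix.smul_mulVec]

lemma dotProduct_mulVec_reciprocal {M : Matrix ι ι ℝ} (hM : IsUnit M.det) (k l : ι → ℝ) :
    M *ᵥ k ⬝ᵥ (2 * π) • (Mᵀ)⁻¹ *ᵥ l = 2 * π * (k ⬝ᵥ l) := by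
  rw [dotProduct_smul, smul_eq_mul, Matrix.dotProduct_mulVec, Matrix.vecMul_mulVec,
    ← Matrix.transpose_nonsing_inv, ← Matrix.transpose_mul, Matrix.nonsing_inv_mul _ hM,
    Matrix.transpose_one, Matrix.vecMul_one]

theorem mem_intLattice_iff_forall_expDotChar_eq_one {M : Matrix ι ι ℝ} (hM : IsUnit M.det)
    (n : ι → ℝ) : n ∈ intLattice M ↔ ∀ μ ∈ reciprocalLattice M, expDotChar n μ = 1 := by
  constructor
  · rintro ⟨k, rfl⟩ μ hμ
    obtain ⟨l, rfl⟩ := mem_reciprocalLattice.mp hμ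
    refine (expDotChar_eq_one_iff _ _).mpr ⟨k ⬝ᵥ l, ?_⟩
    rw [dotProduct_mulVec_reciprocal hM]
    simp [dotProduct]
  · intro h
    have hn : n = M *ᵥ (M⁻¹ *ᵥ n) := by
      rw [Matrix.mulVec_mulVec, Matrix.mul_nonsing_inv _ hM, Matrix.one_mulVec]
    -- pairing `n` with `2π (Mᵀ)⁻¹ eⱼ` gives `2π` times the `j`-th coordinate of `M⁻¹ n`
    have hint : ∀ j, ∃ k : ℤ, (M⁻¹ *ᵥ n) j = k := by
      intro j
      obtain ⟨k, hk⟩ := (expDotChar_eq_one_iff _ _).mp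
        (h _ (mem_reciprocalLattice.mpr ⟨Pi.single j 1, rfl⟩))
      refine ⟨k, ?_⟩
      rw [hn, dotProduct_mulVec_reciprocal hM] at hk
      have h2π : (2 * π : ℝ) ≠ 0 := by positivity
      simpa [Pi.single_apply, dotProduct, h2π] using hk
    choose k hk using hint
    exact ⟨k, by rw [hn]; congr 1; ext j; exact hk j⟩

section CharacterSums

variable {M N : Matrix ι ι ℝ} {κ : Type*} [Fintype κ] (lam : κ → ι → ℝ) {n : ι → ℝ}

theorem sum_expDotChar_eq_card_of_mem (hN : IsUnit N.det)
    (hlam : ∀ m, lam m ∈ reciprocalLattice N) (hn : n ∈ intLattice N) :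
    ∑ m, expDotChar n (lam m) = Fintype.card κ := by
  have hone := (mem_intLattice_iff_forall_expDotChar_eq_one hN n).mp hn
  rw [Finset.sum_congr rfl fun m _ => hone _ (hlam m)]
  simp

theorem sum_expDotChar_cosetReps_eq_zero (hM : IsUnit M.det) (hN : IsUnit N.det)
    (hlam : ∀ m, lam m ∈ reciprocalLattice N)
    (hrep : ∀ x ∈ reciprocalLattice N, ∃! m, x - lam m ∈ reciprocalLattice M)
    (hn : n ∈ intLattice M) (hnN : n ∉ intLattice N) :
    ∑ m, expDotChar n (lam m) = 0 := by
  obtain ⟨μ, hμN, hμ⟩ : ∃ μ ∈ reciprocalLattice N, expDotChar n μ ≠ 1 := by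
    simpa using mt (mem_intLattice_iff_forall_expDotChar_eq_one hN n).mpr hnN
  exact (expDotChar n).sum_cosetReps_eq_zero
    ((mem_intLattice_iff_forall_expDotChar_eq_one hM n).mp hn) lam hlam hrep hμN hμ

end CharacterSums

lemma isUnit_det_mul_intCast {B : Matrix ι ι ℝ} (hB : IsUnit B.det) {A : Matrix ι ι ℤ}
    (hA : A.det ≠ 0) : IsUnit (B * A.map (Int.cast : ℤ → ℝ)).det := by
  rw [Matrix.det_mul, ← Int.cast_det]
  exact hB.mul (isUnit_iff_ne_zero.mpr (Int.cast_ne_zero.mpr hA))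

lemma abs_det_mul_intCast (B : Matrix ι ι ℝ) (A : Matrix ι ι ℤ) :
    |(B * A.map (Int.cast : ℤ → ℝ)).det| = |B.det| * A.det.natAbs := by
  rw [Matrix.det_mul, abs_mul, ← Int.cast_det, Nat.cast_natAbs, Int.cast_abs]

def IsFrequencySupport (C : Matrix ι ι ℝ) (S : Set (ι → ℝ)) : Prop :=
  ∀ n ∈ intLattice C, ∫ ξ in S, Complex.exp (Complex.I * (n ⬝ᵥ ξ : ℝ)) =
    if n = 0 then (((2 * π) ^ Fintype.card ι / |C.det| : ℝ) : ℂ) else 0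

theorem isFrequencySupport_mul_iff_iUnion {B : Matrix ι ι ℝ} (hB : IsUnit B.det)
    {A : Matrix ι ι ℤ} (hA : A.det ≠ 0) {κ : Type*} [Fintype κ] (lam : κ → ι → ℝ)
    (hcard : Fintype.card κ = A.det.natAbs)
    (hlam : ∀ m, lam m ∈ reciprocalLattice (B * A.map (Int.cast : ℤ → ℝ)))
    (hrep : ∀ x ∈ reciprocalLattice (B * A.map (Int.cast : ℤ → ℝ)),
      ∃! m, x - lam m ∈ reciprocalLattice B)
    {S : Set (ι → ℝ)} (hS : MeasurableSet S) (hSfin : volume S ≠ ⊤)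
    (hdisj : Pairwise fun m m' => volume ((lam m + ·) '' S ∩ (lam m' + ·) '' S) = 0) :
    IsFrequencySupport (B * A.map (Int.cast : ℤ → ℝ)) S ↔
      IsFrequencySupport B (⋃ m, (lam m + ·) '' S) := by
  have hBA' := isUnit_det_mul_intCast hB hA
  have hdet := abs_det_mul_intCast B A
  set A' := A.map (Int.cast : ℤ → ℝ)
  rw [← hcard] at hdet
  have hcardC : (Fintype.card κ : ℂ) ≠ 0 := by
    rw [hcard]
    exact Nat.cast_ne_zero.mpr (Int.natAbs_ne_zero.mpr hA)
  have hsplit : ∀ n,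
      ∫ ξ in ⋃ m, (lam m + ·) '' S, Complex.exp (Complex.I * (n ⬝ᵥ ξ : ℝ)) =
        (∑ m, expDotChar n (lam m)) * ∫ ξ in S, Complex.exp (Complex.I * (n ⬝ᵥ ξ : ℝ)) :=
    fun n => setIntegral_iUnion_image_add_left_expDotChar n lam hS hSfin hdisj
  have hvol : ((((2 * π) ^ Fintype.card ι / |(B * A').det| : ℝ) : ℂ)) =
      (((2 * π) ^ Fintype.card ι / |B.det| : ℝ) : ℂ) / Fintype.card κ := by
    rw [hdet, ← div_div]
    push_cast
    rfl
  constructor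
  · intro h n hn
    rw [hsplit n]
    by_cases hnN : n ∈ intLattice (B * A')
    · rw [sum_expDotChar_eq_card_of_mem lam hBA' hlam hnN, h n hnN, hvol]
      split_ifs
      · exact mul_div_cancel₀ _ hcardC
      · exact mul_zero _
    · rw [sum_expDotChar_cosetReps_eq_zero lam hB hBA' hlam hrep hn hnN, zero_mul, if_neg]
      rintro rfl
      exact hnN (zero_mem _)
  · intro h n hnN
    have hunion := h n (intLattice_mul_intCast_le B A hnN)
    rw [hsplit n, sum_expDotChar_eq_card_of_mem lam hBA' hlam hnN] at hunion
    rw [hvol]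
    split_ifs at hunion ⊢
    · rw [eq_div_iff hcardC, mul_comm]
      exact hunion
    · exact (mul_eq_zero.mp hunion).resolve_left hcardC

theorem stmt_2_general (B : Matrix (Fin 2) (Fin 2) ℝ) (hB : IsUnit B.det)
    (A : Matrix (Fin 2) (Fin 2) ℤ) (hA : A.det ≠ 0)
    (d : ℕ) (hd : d = A.det.natAbs)
    (L L' Lrec L'rec : Set (Fin 2 → ℝ))
    (hL : L = {x | ∃ k : Fin 2 → ℤ, x = B.mulVec fun i => (k i : ℝ)})
    (hL' : L' = {x | ∃ k : Fin 2 → ℤ,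
      x = (B * A.map (Int.cast : ℤ → ℝ)).mulVec fun i => (k i : ℝ)})
    (hLrec : Lrec = {x | ∃ k : Fin 2 → ℤ,
      x = (2 * π) • (B.transpose)⁻¹.mulVec fun i => (k i : ℝ)})
    (hL'rec : L'rec = {x | ∃ k : Fin 2 → ℤ,
      x = (2 * π) • ((B.transpose)⁻¹ * ((A.map (Int.cast : ℤ → ℝ)).transpose)⁻¹).mulVec
        fun i => (k i : ℝ)})
    (lam : Fin d → (Fin 2 → ℝ))
    (hlammem : ∀ m, lam m ∈ L'rec)
    (hlamrep : ∀ x ∈ L'rec, ∃! m : Fin d, x - lam m ∈ Lrec)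
    (S' : Set (Fin 2 → ℝ)) (hS'meas : MeasurableSet S')
    (hS'bdd : Bornology.IsBounded S')
    (hdisj : ∀ m n : Fin d, m ≠ n →
      volume (((lam m + ·) '' S') ∩ ((lam n + ·) '' S')) = 0) :
    (∀ n ∈ L', ∫ ξ in S', Complex.exp (Complex.I * (n ⬝ᵥ ξ : ℝ)) =
        if n = 0 then (((2 * π) ^ 2 / |(B * A.map (Int.cast : ℤ → ℝ)).det| : ℝ) : ℂ)
        else 0) ↔
    (∀ n ∈ L, ∫ ξ in ⋃ m : Fin d, (lam m + ·) '' S',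
        Complex.exp (Complex.I * (n ⬝ᵥ ξ : ℝ)) =
        if n = 0 then (((2 * π) ^ 2 / |B.det| : ℝ) : ℂ) else 0) := by
  have hLrec' : Lrec = reciprocalLattice B := by
    ext x
    rw [hLrec, SetLike.mem_coe, mem_reciprocalLattice]
    rfl
  have hL'rec' : L'rec = reciprocalLattice (B * A.map (Int.cast : ℤ → ℝ)) := by
    ext x
    rw [hL'rec, SetLike.mem_coe, mem_reciprocalLattice, Matrix.transpose_mul, Matrix.mul_inv_rev]
    rfl
  subst hL hL' hLrec' hL'rec'
  have key := isFrequencySupport_mul_iff_iUnion hB hA lam (by simp [hd]) hlammem hlamrep hS'meas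
    hS'bdd.measure_lt_top.ne hdisj
  simp only [IsFrequencySupport, Fintype.card_fin] at key
  exact key

/-- with `λ_m` coset representatives of `ℒ̃` in `(ℒ')̃` and `S'` bounded
measurable with a.e.-disjoint translates `S' + λ_m`, the set `S'` is a frequency
support of `ℒ' = BAℤ²` iff `⋃_m (S' + λ_m)` is a frequency support of `ℒ = Bℤ²`. -/
theorem stmt_2 (B : Matrix (Fin 2) (Fin 2) ℝ) (hB : IsUnit B.det)
    (A : Matrix (Fin 2) (Fin 2) ℤ) (hA : A.det ≠ 0)
    (d : ℕ) (hd : d = A.det.natAbs)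
    (L L' Lrec L'rec : Set (Fin 2 → ℝ))
    (hL : L = {x | ∃ k : Fin 2 → ℤ, x = B.mulVec fun i => (k i : ℝ)})
    (hL' : L' = {x | ∃ k : Fin 2 → ℤ,
      x = (B * A.map (Int.cast : ℤ → ℝ)).mulVec fun i => (k i : ℝ)})
    (hLrec : Lrec = {x | ∃ k : Fin 2 → ℤ,
      x = (2 * π) • (B.transpose)⁻¹.mulVec fun i => (k i : ℝ)})
    (hL'rec : L'rec = {x | ∃ k : Fin 2 → ℤ,
      x = (2 * π) • ((B.transpose)⁻¹ * ((A.map (Int.cast : ℤ → ℝ)).transpose)⁻¹).mulVec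
        fun i => (k i : ℝ)})
    (lam : Fin d → (Fin 2 → ℝ)) (hd0 : 0 < d)
    (hlam0 : lam ⟨0, hd0⟩ = 0)
    (hlammem : ∀ m, lam m ∈ L'rec)
    (hlamrep : ∀ x ∈ L'rec, ∃! m : Fin d, x - lam m ∈ Lrec)
    (S' : Set (Fin 2 → ℝ)) (hS'meas : MeasurableSet S')
    (hS'bdd : Bornology.IsBounded S')
    (hdisj : ∀ m n : Fin d, m ≠ n →
      volume (((lam m + ·) '' S') ∩ ((lam n + ·) '' S')) = 0) :
    (∀ n ∈ L', ∫ ξ in S', Complex.exp (Complex.I * (n ⬝ᵥ ξ : ℝ)) =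
        if n = 0 then (((2 * π) ^ 2 / |(B * A.map (Int.cast : ℤ → ℝ)).det| : ℝ) : ℂ)
        else 0) ↔
    (∀ n ∈ L, ∫ ξ in ⋃ m : Fin d, (lam m + ·) '' S',
        Complex.exp (Complex.I * (n ⬝ᵥ ξ : ℝ)) =
        if n = 0 then (((2 * π) ^ 2 / |B.det| : ℝ) : ℂ) else 0) :=
  stmt_2_general B hB A hA d hd L L' Lrec L'rec hL hL' hLrec hL'rec lam hlammem hlamrep S' hS'meas
    hS'bdd hdisj
end

section
/- Let M₀, M₁, …, M₆ : ℝ² → ℂ be continuous functions and let ν ∈ ℝ². For 0 ≤ j ≤ 6 define B(j,ν) = supp(M_j) ∩ (supp(M_j) − ν), where supp denotes the closure of the set where the function is nonzero, and define C(j,ν) = B(j,ν) \ ⋃_{j'≠j} B(j',ν). If the shift cancellation identity ∑_{j=0}^{6} M_j(ξ)·conj(M_j(ξ + ν)) = 0 holds for every ξ ∈ ℝ², then for every j ∈ {0, …, 6} the set C(j,ν) has empty interior. -/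
open scoped ComplexConjugate

/-- if the shift cancellation identity
`∑_{j=0}^{6} M_j(ξ) conj (M_j(ξ+ν)) = 0` holds everywhere, then for each `j` the set
`C(j,ν) = B(j,ν) \ ⋃_{j'≠j} B(j',ν)` has empty interior, where
`B(j,ν) = supp(M_j) ∩ (supp(M_j) - ν)`. -/
theorem stmt_6 (M : Fin 7 → (Fin 2 → ℝ) → ℂ) (hM : ∀ j, Continuous (M j))
    (ν : Fin 2 → ℝ)
    (B : Fin 7 → Set (Fin 2 → ℝ))
    (hB : ∀ j, B j = closure {ξ | M j ξ ≠ 0} ∩ {ξ | ξ + ν ∈ closure {ξ' | M j ξ' ≠ 0}})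
    (C : Fin 7 → Set (Fin 2 → ℝ))
    (hC : ∀ j, C j = B j \ ⋃ j' ∈ ({j' | j' ≠ j} : Set (Fin 7)), B j')
    (hcancel : ∀ ξ : Fin 2 → ℝ, ∑ j : Fin 7, M j ξ * conj (M j (ξ + ν)) = 0) :
    ∀ j, interior (C j) = ∅ := by
  intro j
  by_contra h
  obtain ⟨ξ₀, hξ₀⟩ := Set.nonempty_iff_ne_empty.mpr h
  -- On C j, the j-th term of the cancellation sum vanishes pointwise.
  have key : ∀ ξ ∈ C j, M j ξ * conj (M j (ξ + ν)) = 0 := by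
    intro ξ hξ
    rw [hC j] at hξ
    have hz : ∀ j' : Fin 7, j' ≠ j → M j' ξ * conj (M j' (ξ + ν)) = 0 := by
      intro j' hj'
      have hnb : ξ ∉ B j' := fun hb => hξ.2 (Set.mem_biUnion hj' hb)
      rw [hB j'] at hnb
      rcases not_and_or.mp hnb with h1 | h2
      · have : M j' ξ = 0 := by
          by_contra hne
          exact h1 (subset_closure hne)
        simp [this]
      · have : M j' (ξ + ν) = 0 := by
          by_contra hne
          exact h2 (subset_closure hne)
        simp [this]
    have := hcancel ξ
    rwa [Fintype.sum_eq_single j hz] at this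
  have hU : IsOpen (interior (C j)) := isOpen_interior
  have hBj : ξ₀ ∈ B j := ((hC j) ▸ interior_subset hξ₀).1
  rw [hB j] at hBj
  -- find ξ₁ ∈ interior (C j) with M j ξ₁ ≠ 0
  obtain ⟨ξ₁, hξ₁U, hξ₁⟩ :=
    (_root_.mem_closure_iff.mp hBj.1) (interior (C j)) hU hξ₀
  -- W := interior (C j) ∩ {M j ≠ 0} is open and contains ξ₁
  have hWopen : IsOpen (interior (C j) ∩ {ξ | M j ξ ≠ 0}) :=
    hU.inter (isOpen_ne.preimage (hM j))
  have hξ₁W : ξ₁ ∈ interior (C j) ∩ {ξ | M j ξ ≠ 0} := ⟨hξ₁U, hξ₁⟩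
  -- ξ₁ + ν ∈ closure {M j ≠ 0}
  have hBj1 : ξ₁ ∈ B j := ((hC j) ▸ interior_subset hξ₁U).1
  rw [hB j] at hBj1
  have hcl : ξ₁ + ν ∈ closure {ξ' | M j ξ' ≠ 0} := hBj1.2
  -- the shifted open set
  have hshift : IsOpen ((fun η => η - ν) ⁻¹' (interior (C j) ∩ {ξ | M j ξ ≠ 0})) :=
    hWopen.preimage (continuous_id.sub continuous_const)
  have hmem : ξ₁ + ν ∈ (fun η => η - ν) ⁻¹' (interior (C j) ∩ {ξ | M j ξ ≠ 0}) := by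
    simpa using hξ₁W
  obtain ⟨η, hηW, hη⟩ := (_root_.mem_closure_iff.mp hcl) _ hshift hmem
  -- ξ₂ := η - ν satisfies M j ξ₂ ≠ 0 and M j (ξ₂ + ν) ≠ 0, contradiction
  have hξ₂C : η - ν ∈ C j := interior_subset hηW.1
  have hprod := key _ hξ₂C
  have hfix : η - ν + ν = η := by abel
  rw [hfix] at hprod
  rcases mul_eq_zero.mp hprod with h1 | h2
  · exact hηW.2 h1
  · exact hη (by simpa using h2)
end

section
/- Let Ω ⊂ ℝ², ν ∈ ℝ², η₁, η₂ ∈ ℝ², and let 𝓜₁, 𝓜₂ : ℝ² → ℝ be real-valued functions. Define M₁, M₂ : Ω ∪ (Ω + ν) → ℂ by M_j(ξ) = e^{i ξ·η_j} 𝓜_j(ξ). Assume e^{i ν·(η₁ − η₂)} = −1, and assume that for every ξ ∈ Ω + ν, 𝓜₁(ξ) = 𝓜₂(ξ − ν) and 𝓜₂(ξ) = 𝓜₁(ξ − ν). Then for every ξ ∈ Ω with ξ + ν ∈ Ω + ν, M₁(ξ)·conj(M₁(ξ+ν)) + M₂(ξ)·conj(M₂(ξ+ν)) = 0. -/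
open scoped ComplexConjugate Matrix

/-! By the swap of the profiles, each term `M_j(ξ) conj (M_j(ξ+ν))` equals
`e^{-i ν·η_j} 𝓜₁(ξ) 𝓜₂(ξ)`, and the phase condition makes the two phases opposite. -/

open Complex

lemma exp_I_mul_mul_conj_exp_I_mul (s t : ℝ) :
    exp (I * s) * conj (exp (I * t)) = exp (I * (s - t : ℝ)) := by
  rw [← exp_conj, map_mul, conj_I, conj_ofReal, ← exp_add]
  push_cast
  ring_nf

lemma modulated_mul_conj_modulated_add {n : Type*} [Fintype n] (ξ ν η : n → ℝ) (a b : ℝ) :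
    exp (I * (ξ ⬝ᵥ η : ℝ)) * a * conj (exp (I * ((ξ + ν) ⬝ᵥ η : ℝ)) * b) =
      exp (I * (-(ν ⬝ᵥ η) : ℝ)) * (a * b : ℝ) := by
  have hphase : ξ ⬝ᵥ η - (ξ + ν) ⬝ᵥ η = -(ν ⬝ᵥ η) := by
    rw [add_dotProduct]; ring
  rw [map_mul, conj_ofReal, ← hphase, ← exp_I_mul_mul_conj_exp_I_mul]
  push_cast
  ring

lemma exp_I_mul_neg_add_exp_I_mul_neg_eq_zero {x y : ℝ} (h : exp (I * (x - y : ℝ)) = -1) :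
    exp (I * (-x : ℝ)) + exp (I * (-y : ℝ)) = 0 := by
  have hx : exp (I * (-x : ℝ)) = exp (I * (-y : ℝ)) * (exp (I * (x - y : ℝ)))⁻¹ := by
    rw [← exp_neg, ← exp_add]
    push_cast
    ring_nf
  rw [hx, h, inv_neg, inv_one, mul_neg_one, neg_add_cancel]

/-- if `M_j(ξ) = e^{i ξ·η_j} 𝓜_j(ξ)` on `Ω ∪ (Ω+ν)`, the phases satisfy
`e^{i ν·(η₁-η₂)} = -1`, and the real profiles swap under the shift `ν`, then the local
shift cancellation identity holds on `Ω`. -/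
theorem stmt_9 (Ω : Set (Fin 2 → ℝ)) (ν η₁ η₂ : Fin 2 → ℝ)
    (𝓜₁ 𝓜₂ : (Fin 2 → ℝ) → ℝ) (M₁ M₂ : (Fin 2 → ℝ) → ℂ)
    (hM₁ : ∀ ξ ∈ Ω ∪ (fun η => η + ν) '' Ω,
      M₁ ξ = Complex.exp (Complex.I * (ξ ⬝ᵥ η₁ : ℝ)) * (𝓜₁ ξ : ℂ))
    (hM₂ : ∀ ξ ∈ Ω ∪ (fun η => η + ν) '' Ω,
      M₂ ξ = Complex.exp (Complex.I * (ξ ⬝ᵥ η₂ : ℝ)) * (𝓜₂ ξ : ℂ))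
    (hphase : Complex.exp (Complex.I * (ν ⬝ᵥ (η₁ - η₂) : ℝ)) = -1)
    (hswap : ∀ ξ ∈ (fun η => η + ν) '' Ω, 𝓜₁ ξ = 𝓜₂ (ξ - ν) ∧ 𝓜₂ ξ = 𝓜₁ (ξ - ν)) :
    ∀ ξ ∈ Ω, ξ + ν ∈ (fun η => η + ν) '' Ω →
      M₁ ξ * conj (M₁ (ξ + ν)) + M₂ ξ * conj (M₂ (ξ + ν)) = 0 := by
  intro ξ hξ hξν
  obtain ⟨h₁, h₂⟩ := hswap (ξ + ν) hξν
  rw [add_sub_cancel_right] at h₁ h₂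
  rw [dotProduct_sub] at hphase
  calc M₁ ξ * conj (M₁ (ξ + ν)) + M₂ ξ * conj (M₂ (ξ + ν))
      = exp (I * (-(ν ⬝ᵥ η₁) : ℝ)) * (𝓜₁ ξ * 𝓜₂ ξ : ℝ) +
          exp (I * (-(ν ⬝ᵥ η₂) : ℝ)) * (𝓜₂ ξ * 𝓜₁ ξ : ℝ) := by
        rw [hM₁ ξ (.inl hξ), hM₁ _ (.inr hξν), hM₂ ξ (.inl hξ), hM₂ _ (.inr hξν), h₁, h₂,
          modulated_mul_conj_modulated_add, modulated_mul_conj_modulated_add]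
    _ = (exp (I * (-(ν ⬝ᵥ η₁) : ℝ)) + exp (I * (-(ν ⬝ᵥ η₂) : ℝ))) * (𝓜₁ ξ * 𝓜₂ ξ : ℝ) := by
        push_cast; ring
    _ = 0 := by rw [exp_I_mul_neg_add_exp_I_mul_neg_eq_zero hphase, zero_mul]
end
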